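/- Let A be a Banach lattice algebra with identity e and let p ∈ A with p ≥ 0. Then p is a left band projection (for every x ≥ 0 one has px ≤ x and p²x = px) if and only if p is an order idempotent (p² = p and p ≤ e). The same equivalence holds for right band projections (for every x ≥ 0, xp ≤ x and xp² = xp). -/

import Mathlib

/-! Everything reduces to the positivity of the identity: once `0 ≤ e`, testing the left band
projection conditions at `x = e` gives `p ≤ e` and `p² = p`, and conversely `p ≤ e` gives
`p x ≤ e x = x` for `x ≥ 0`. The right-hand statement is the left-hand one for the opposite
product `mul.flip`.

For `0 ≤ e`, put `f = |e| = e + g` with `g ≥ 0`. Then `fⁿ ≥ e + n • g`, since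
`f fⁿ = fⁿ + g (fⁿ - e) + g` and `g (fⁿ - e) ≥ 0`, while `‖fⁿ‖ ≤ ‖f‖ⁿ = 1`. Solidity of the norm
gives `n ‖g‖ ≤ ‖fⁿ - e‖ ≤ 2` for all `n`, hence `g = 0` and `e = |e| ≥ 0`. -/

section OrderedAlgebra

variable {A : Type*} [AddCommGroup A] [PartialOrder A] [IsOrderedAddMonoid A] [Module ℝ A]
  (mul : A →ₗ[ℝ] A →ₗ[ℝ] A) (mul_nonneg : ∀ a b : A, 0 ≤ a → 0 ≤ b → 0 ≤ mul a b)
  {e : A} (one_mul : ∀ a : A, mul e a = a) (mul_one : ∀ a : A, mul a e = a)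
include mul_nonneg one_mul mul_one

theorem nsmul_le_iterate_mul_sub {g : A} (hg : 0 ≤ g) (n : ℕ) :
    n • g ≤ (mul (e + g))^[n] e - e := by
  induction n with
  | zero => simp
  | succ n ih =>
    rw [Function.iterate_succ_apply']
    generalize (mul (e + g))^[n] e = q at ih ⊢
    have hq : 0 ≤ q - e := (nsmul_nonneg hg n).trans ih
    have step : mul (e + g) q - e = (q - e) + mul g (q - e) + g := by
      rw [map_add, LinearMap.add_apply, one_mul, map_sub, mul_one]
      abel
    rw [step, succ_nsmul]
    exact add_le_add_left (le_add_of_le_of_nonneg ih (mul_nonneg _ _ hg hq)) g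

theorem left_band_projection_iff_order_idempotent_of_unit_nonneg {p : A} (he : 0 ≤ e) :
    (∀ x : A, 0 ≤ x → mul p x ≤ x ∧ mul (mul p p) x = mul p x) ↔ (mul p p = p ∧ p ≤ e) := by
  constructor
  · intro h
    obtain ⟨hpe, hidem⟩ := h e he
    simp only [mul_one] at hpe hidem
    exact ⟨hidem, hpe⟩
  · rintro ⟨hidem, hpe⟩ x hx
    refine ⟨?_, by rw [hidem]⟩
    have := mul_nonneg _ _ (sub_nonneg.mpr hpe) hx
    rwa [map_sub, LinearMap.sub_apply, one_mul, sub_nonneg] at this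

end OrderedAlgebra

theorem norm_iterate_mul_le {A : Type*} [SeminormedAddCommGroup A] [Module ℝ A]
    (mul : A →ₗ[ℝ] A →ₗ[ℝ] A) (norm_mul_le : ∀ a b : A, ‖mul a b‖ ≤ ‖a‖ * ‖b‖) (f a : A) (n : ℕ) :
    ‖(mul f)^[n] a‖ ≤ ‖f‖ ^ n * ‖a‖ := by
  induction n with
  | zero => simp
  | succ n ih =>
    rw [Function.iterate_succ_apply', pow_succ', mul_assoc]
    exact (norm_mul_le _ _).trans (mul_le_mul_of_nonneg_left ih (norm_nonneg f))

theorem eq_zero_of_forall_norm_nsmul_le {E : Type*} [NormedAddCommGroup E] [NormedSpace ℝ E]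
    {g : E} {C : ℝ} (h : ∀ n : ℕ, ‖n • g‖ ≤ C) : g = 0 := by
  by_contra hg
  have hpos : 0 < ‖g‖ := norm_pos_iff.mpr hg
  obtain ⟨n, hn⟩ := exists_nat_gt (C / ‖g‖)
  have := h n
  rw [RCLike.norm_nsmul ℝ, nsmul_eq_mul] at this
  rw [div_lt_iff₀ hpos] at hn
  linarith

theorem unit_nonneg_of_norm_eq_one {A : Type*} [NormedAddCommGroup A] [Lattice A]
    [HasSolidNorm A] [IsOrderedAddMonoid A] [NormedSpace ℝ A] (mul : A →ₗ[ℝ] A →ₗ[ℝ] A)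
    (norm_mul_le : ∀ a b : A, ‖mul a b‖ ≤ ‖a‖ * ‖b‖)
    (mul_nonneg : ∀ a b : A, 0 ≤ a → 0 ≤ b → 0 ≤ mul a b)
    {e : A} (one_mul : ∀ a : A, mul e a = a) (mul_one : ∀ a : A, mul a e = a) (norm_e : ‖e‖ = 1) :
    0 ≤ e := by
  set g := |e| - e
  have hg : 0 ≤ g := sub_nonneg.mpr (le_abs_self e)
  have habs : e + g = |e| := add_sub_cancel e |e|
  have hbound (n : ℕ) : ‖n • g‖ ≤ 2 := calc
    ‖n • g‖ ≤ ‖(mul (e + g))^[n] e - e‖ :=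
      norm_le_norm_of_abs_le_abs <| abs_le_abs_of_nonneg (nsmul_nonneg hg n)
        (nsmul_le_iterate_mul_sub mul mul_nonneg one_mul mul_one hg n)
    _ ≤ ‖(mul (e + g))^[n] e‖ + ‖e‖ := norm_sub_le _ _
    _ ≤ ‖e + g‖ ^ n * ‖e‖ + ‖e‖ := by gcongr; exact norm_iterate_mul_le mul norm_mul_le _ _ n
    _ = 2 := by rw [habs, norm_abs_eq_norm, norm_e]; norm_num
  rw [← sub_eq_zero.mp (eq_zero_of_forall_norm_nsmul_le hbound)]
  exact abs_nonneg e

theorem left_right_band_projection_iff_order_idempotent_general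
    {A : Type*} [NormedAddCommGroup A] [Lattice A] [HasSolidNorm A]
    [IsOrderedAddMonoid A] [NormedSpace ℝ A]
    (mul : A →ₗ[ℝ] A →ₗ[ℝ] A)
    (norm_mul_le : ∀ a b : A, ‖mul a b‖ ≤ ‖a‖ * ‖b‖)
    (mul_nonneg : ∀ a b : A, 0 ≤ a → 0 ≤ b → 0 ≤ mul a b)
    (e : A) (one_mul : ∀ a : A, mul e a = a) (mul_one : ∀ a : A, mul a e = a)
    (norm_e : ‖e‖ = 1)
    (p : A) :
    ((∀ x : A, 0 ≤ x → mul p x ≤ x ∧ mul (mul p p) x = mul p x) ↔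
      (mul p p = p ∧ p ≤ e)) ∧
    ((∀ x : A, 0 ≤ x → mul x p ≤ x ∧ mul x (mul p p) = mul x p) ↔
      (mul p p = p ∧ p ≤ e)) := by
  have he : 0 ≤ e := unit_nonneg_of_norm_eq_one mul norm_mul_le mul_nonneg one_mul mul_one norm_e
  exact ⟨left_band_projection_iff_order_idempotent_of_unit_nonneg mul mul_nonneg one_mul mul_one he,
    left_band_projection_iff_order_idempotent_of_unit_nonneg mul.flip
      (fun a b ha hb ↦ mul_nonneg b a hb ha) mul_one one_mul he⟩

/-- In a Banach lattice algebra with identity `e`, a positive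
element `p` is a left band projection iff it is an order idempotent, and likewise for
right band projections. -/
theorem left_right_band_projection_iff_order_idempotent
    {A : Type*} [NormedAddCommGroup A] [Lattice A] [HasSolidNorm A]
    [IsOrderedAddMonoid A] [NormedSpace ℝ A]
    [PosSMulStrictMono ℝ A] [CompleteSpace A]
    (mul : A →ₗ[ℝ] A →ₗ[ℝ] A)
    (mul_assoc : ∀ a b c : A, mul (mul a b) c = mul a (mul b c))
    (norm_mul_le : ∀ a b : A, ‖mul a b‖ ≤ ‖a‖ * ‖b‖)
    (mul_nonneg : ∀ a b : A, 0 ≤ a → 0 ≤ b → 0 ≤ mul a b)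
    (e : A) (one_mul : ∀ a : A, mul e a = a) (mul_one : ∀ a : A, mul a e = a)
    (norm_e : ‖e‖ = 1)
    (p : A) (hp : 0 ≤ p) :
    ((∀ x : A, 0 ≤ x → mul p x ≤ x ∧ mul (mul p p) x = mul p x) ↔
      (mul p p = p ∧ p ≤ e)) ∧
    ((∀ x : A, 0 ≤ x → mul x p ≤ x ∧ mul x (mul p p) = mul x p) ↔
      (mul p p = p ∧ p ≤ e)) :=
  left_right_band_projection_iff_order_idempotent_general mul norm_mul_le mul_nonneg e one_mul
    mul_one norm_e p
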